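/- Let A₁, …, A_k ∈ GL_n(ℝ), let Λ_k ⊂ ℝ^{n(k+1)} be the lattice spanned by the block matrix M_{A₁,…,A_k}, let p₁ be the projection onto the first nk coordinates and p₂ the projection onto the last n coordinates, and let W^k = (−1/2, 1/2]^{nk}. Then (Â_k ∘ ⋯ ∘ Â₁)(ℤⁿ) = p₂( Λ_k ∩ p₁^{-1}(W^k) ). -/

import Mathlib

/-- The rounding projection `P : ℝ → ℤ`, with `P t - 1/2 < t ≤ P t + 1/2`. -/
noncomputable def roundHalf (t : ℝ) : ℤ := ⌈t - 1/2⌉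

/-- The discretization `Â = π ∘ A` of a matrix `A`, as a map `ℤⁿ → ℤⁿ`. -/
noncomputable def disc {n : ℕ} (A : Matrix (Fin n) (Fin n) ℝ) (x : Fin n → ℤ) :
    Fin n → ℤ :=
  fun i => roundHalf (A.mulVec (fun j => (x j : ℝ)) i)

/-- The composition `Â_k ∘ ⋯ ∘ Â₁` of the discretizations. -/
noncomputable def discComp {n : ℕ} :
    (k : ℕ) → (Fin k → Matrix (Fin n) (Fin n) ℝ) → (Fin n → ℤ) → (Fin n → ℤ)
  | 0, _ => id
  | k + 1, A => disc (A (Fin.last k)) ∘ discComp k (fun i => A i.castSucc)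

/-- The linear map `M_{A₁,…,A_k}` on `ℝ^{n(k+1)}` (viewed in blocks): diagonal blocks
`A₁,…,A_k, Id`, superdiagonal blocks `−Id`. -/
noncomputable def Mblock {n k : ℕ} (A : Fin k → Matrix (Fin n) (Fin n) ℝ)
    (x : Fin (k + 1) → Fin n → ℝ) : Fin (k + 1) → Fin n → ℝ :=
  fun i => if h : (i : ℕ) < k
    then (A ⟨i, h⟩).mulVec (x i) - x ⟨(i : ℕ) + 1, Nat.succ_lt_succ h⟩
    else x i

/-- The lattice `Λ_k = M_{A₁,…,A_k} ℤ^{n(k+1)}`. -/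
noncomputable def latticeM {n k : ℕ} (A : Fin k → Matrix (Fin n) (Fin n) ℝ) :
    Set (Fin (k + 1) → Fin n → ℝ) :=
  Mblock A '' {x | ∀ i j, ∃ m : ℤ, x i j = (m : ℝ)}

/-!
A point of `Λ_k` is `M x` for an integer vector `x = (x₀, …, x_k)`, and its first `k` blocks
are the residues `A_{i+1} x_i - x_{i+1}`. These all lie in `(-1/2, 1/2]` exactly when each
`x_{i+1}` is the rounding of `A_{i+1} x_i`, i.e. when `x` is the orbit of `x₀` under the
discretizations; the last block of `M x` is `x_k` itself.
-/

open Set Matrix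

lemma roundHalf_eq_iff {t : ℝ} {m : ℤ} : roundHalf t = m ↔ t - m ∈ Ioc (-(1/2)) (1/2) := by
  rw [roundHalf, Int.ceil_eq_iff, mem_Ioc]
  constructor <;> rintro ⟨h₁, h₂⟩ <;> constructor <;> linarith

lemma disc_eq_iff {n : ℕ} {A : Matrix (Fin n) (Fin n) ℝ} {x y : Fin n → ℤ} :
    disc A x = y ↔ ∀ j, (A *ᵥ fun j => (x j : ℝ)) j - y j ∈ Ioc (-(1/2)) (1/2) := by
  simp only [funext_iff, disc, roundHalf_eq_iff]

section Orbit

variable {n k : ℕ} (A : Fin k → Matrix (Fin n) (Fin n) ℝ)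

/-- The orbit `z, Â₁ z, Â₂ Â₁ z, …, Â_k ⋯ Â₁ z`. -/
noncomputable def discOrbit (z : Fin n → ℤ) (i : Fin (k + 1)) : Fin n → ℤ :=
  discComp i (fun j => A (j.castLE (Nat.lt_succ_iff.mp i.isLt))) z

lemma discOrbit_succ (z : Fin n → ℤ) (i : Fin k) :
    discOrbit A z i.succ = disc (A i) (discOrbit A z i.castSucc) := rfl

lemma discOrbit_last (z : Fin n → ℤ) : discOrbit A z (Fin.last k) = discComp k A z := rfl

lemma eq_discOrbit_of_succ {m : Fin (k + 1) → Fin n → ℤ}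
    (hm : ∀ i : Fin k, m i.succ = disc (A i) (m i.castSucc)) : m = discOrbit A (m 0) := by
  funext i
  induction i using Fin.induction with
  | zero => rfl
  | succ i ih => rw [hm, ih, discOrbit_succ]

lemma Mblock_castSucc (x : Fin (k + 1) → Fin n → ℝ) (i : Fin k) :
    Mblock A x i.castSucc = A i *ᵥ x i.castSucc - x i.succ :=
  dif_pos i.isLt

lemma Mblock_last (x : Fin (k + 1) → Fin n → ℝ) : Mblock A x (Fin.last k) = x (Fin.last k) :=
  dif_neg k.lt_irrefl

lemma Mblock_castSucc_mem_Ioc_iff (m : Fin (k + 1) → Fin n → ℤ) :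
    (∀ (i : Fin k) j, Mblock A (fun i j => (m i j : ℝ)) i.castSucc j ∈ Ioc (-(1/2)) (1/2)) ↔
      ∀ i, m i.succ = disc (A i) (m i.castSucc) := by
  simp only [Mblock_castSucc, Pi.sub_apply, eq_comm (a := m _), disc_eq_iff]

end Orbit

theorem stmt8_general (n k : ℕ) (A : Fin k → Matrix (Fin n) (Fin n) ℝ) :
    (fun v : Fin n → ℤ => fun j => (v j : ℝ)) '' Set.range (discComp k A) =
      (fun x : Fin (k + 1) → Fin n → ℝ => x (Fin.last k)) ''
        (latticeM A ∩
          (fun x : Fin (k + 1) → Fin n → ℝ => fun i : Fin k => x i.castSucc) ⁻¹'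
            {y : Fin k → Fin n → ℝ | ∀ i j, -(1/2 : ℝ) < y i j ∧ y i j ≤ 1/2}) := by
  ext v
  simp only [mem_image, mem_range, mem_inter_iff, mem_preimage, mem_ofPred_eq, latticeM]
  constructor
  · rintro ⟨-, ⟨z, rfl⟩, rfl⟩
    refine ⟨_, ⟨⟨fun i j => (discOrbit A z i j : ℝ), fun i j => ⟨_, rfl⟩, rfl⟩, ?_⟩, ?_⟩
    · exact (Mblock_castSucc_mem_Ioc_iff A _).2 (discOrbit_succ A z)
    · rw [Mblock_last, discOrbit_last]
  · rintro ⟨-, ⟨⟨x, hx, rfl⟩, hW⟩, rfl⟩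
    choose m hm using hx
    obtain rfl : x = fun i j => (m i j : ℝ) := funext₂ hm
    have horbit := eq_discOrbit_of_succ A ((Mblock_castSucc_mem_Ioc_iff A m).1 hW)
    refine ⟨_, ⟨m 0, rfl⟩, ?_⟩
    rw [Mblock_last, ← discOrbit_last, ← horbit]

/-- `(Â_k ∘ ⋯ ∘ Â₁)(ℤⁿ) = p₂(Λ_k ∩ p₁⁻¹(W^k))`, where `p₁` is the
projection on the first `nk` coordinates, `p₂` the projection on the last `n`
coordinates, and `W^k = (−1/2,1/2]^{nk}`. -/
theorem stmt8 (n k : ℕ) (A : Fin k → Matrix (Fin n) (Fin n) ℝ)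
    (hA : ∀ i, IsUnit (A i).det) :
    (fun v : Fin n → ℤ => fun j => (v j : ℝ)) '' Set.range (discComp k A) =
      (fun x : Fin (k + 1) → Fin n → ℝ => x (Fin.last k)) ''
        (latticeM A ∩
          (fun x : Fin (k + 1) → Fin n → ℝ => fun i : Fin k => x i.castSucc) ⁻¹'
            {y : Fin k → Fin n → ℝ | ∀ i j, -(1/2 : ℝ) < y i j ∧ y i j ≤ 1/2}) :=
  stmt8_general n k A
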